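/- Let G be a finite simple bipartite graph with parts V and W (every edge of G joins a vertex of V to a vertex of W). Then Σ_{v ∈ V} E_G(v) = Σ_{w ∈ W} E_G(w); that is, the energy of a bipartite graph is divided evenly between its two parts. -/

import Mathlib

/-! The `V`–`W` block `B = P_V A P_W` of the adjacency matrix satisfies `A = B + Bᵀ` and `B² = 0`,
so `A Aᵀ = B Bᵀ + Bᵀ B` is a sum of two positive semidefinite matrices with product zero. Hence
`|A| = √(B Bᵀ) + √(Bᵀ B)`, where the first summand lives on `V × V` and the second on `W × W`.
The energies of `V` and of `W` are therefore `tr √(B Bᵀ)` and `tr √(Bᵀ B)`, which agree because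
`B Bᵀ` and `Bᵀ B` have the same characteristic polynomial. -/

open Matrix Finset

/-- The energy of the vertex `i` of a finite simple graph `G`:
the `(i,i)` entry of `|A| = (A Aᴴ)^{1/2}`, where `A` is the adjacency matrix. -/
noncomputable def vertexEnergy {n : ℕ} (G : SimpleGraph (Fin n)) [DecidableRel G.Adj]
    (i : Fin n) : ℝ :=
  ((Matrix.posSemidef_self_mul_conjTranspose (G.adjMatrix ℝ)).1.eigenvectorUnitary.1 *
      diagonal ((RCLike.ofReal : ℝ → ℝ) ∘ (√·) ∘ (Matrix.posSemidef_self_mul_conjTranspose (G.adjMatrix ℝ)).1.eigenvalues) *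
      (star (Matrix.posSemidef_self_mul_conjTranspose (G.adjMatrix ℝ)).1.eigenvectorUnitary :
        Matrix (Fin n) (Fin n) ℝ)) i i

open scoped MatrixOrder ComplexOrder

lemma IsSelfAdjoint.mul_eq_zero_symm {R : Type*} [NonUnitalNonAssocRing R] [StarRing R] {a b : R}
    (ha : IsSelfAdjoint a) (hb : IsSelfAdjoint b) (h : a * b = 0) : b * a = 0 :=
  (ha.commute_of_mul_eq_zero hb h).eq ▸ h

namespace Matrix

variable {n m 𝕜 : Type*} [Fintype n] [DecidableEq n] [RCLike 𝕜]

lemma PosSemidef.sqrt_mul_eq_zero {X : Matrix n n 𝕜} {M : Matrix n m 𝕜} (hX : X.PosSemidef)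
    (h : X * M = 0) : CFC.sqrt X * M = 0 := by
  rw [← conjTranspose_mul_self_eq_zero, conjTranspose_mul,
    (CFC.sqrt_nonneg X).posSemidef.isHermitian.eq, Matrix.mul_assoc,
    ← Matrix.mul_assoc (CFC.sqrt X), CFC.sqrt_mul_sqrt_self X hX.nonneg, h, Matrix.mul_zero]

lemma PosSemidef.sqrt_mul_sqrt_eq_zero {X Y : Matrix n n 𝕜} (hX : X.PosSemidef)
    (hY : Y.PosSemidef) (h : X * Y = 0) : CFC.sqrt X * CFC.sqrt Y = 0 := by
  have hsX : IsSelfAdjoint (CFC.sqrt X) := .of_nonneg (CFC.sqrt_nonneg X)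
  have hsY : IsSelfAdjoint (CFC.sqrt Y) := .of_nonneg (CFC.sqrt_nonneg Y)
  have hYsX : Y * CFC.sqrt X = 0 :=
    hsX.mul_eq_zero_symm (.of_nonneg hY.nonneg) (hX.sqrt_mul_eq_zero h)
  exact hsY.mul_eq_zero_symm hsX (hY.sqrt_mul_eq_zero hYsX)

lemma PosSemidef.sqrt_add_of_mul_eq_zero {X Y : Matrix n n 𝕜} (hX : X.PosSemidef)
    (hY : Y.PosSemidef) (h : X * Y = 0) : CFC.sqrt (X + Y) = CFC.sqrt X + CFC.sqrt Y := by
  have hXY := hX.sqrt_mul_sqrt_eq_zero hY h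
  have hYX : CFC.sqrt Y * CFC.sqrt X = 0 :=
    (IsSelfAdjoint.of_nonneg (CFC.sqrt_nonneg X)).mul_eq_zero_symm
      (.of_nonneg (CFC.sqrt_nonneg Y)) hXY
  refine CFC.sqrt_unique ?_ (add_nonneg (CFC.sqrt_nonneg X) (CFC.sqrt_nonneg Y))
  rw [add_mul, mul_add, mul_add, hXY, hYX, CFC.sqrt_mul_sqrt_self X hX.nonneg,
    CFC.sqrt_mul_sqrt_self Y hY.nonneg, add_zero, zero_add]

lemma PosSemidef.trace_mul_sqrt_eq_zero {X M : Matrix n n 𝕜} (hX : X.PosSemidef)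
    (h : X * M = 0) : (M * CFC.sqrt X).trace = 0 := by
  rw [trace_mul_comm, hX.sqrt_mul_eq_zero h, trace_zero]

lemma IsHermitian.trace_cfc {A : Matrix n n 𝕜} (hA : A.IsHermitian) (f : ℝ → ℝ) :
    (cfc f A).trace = (A.charpoly.roots.map fun z => (f (RCLike.re z) : 𝕜)).sum := by
  rw [hA.cfc_eq, IsHermitian.cfc, Unitary.conjStarAlgAut_apply, trace_mul_cycle,
    Unitary.coe_star_mul_self, one_mul, trace_diagonal, hA.roots_charpoly_eq_eigenvalues,
    Multiset.map_map, Finset.sum_eq_multiset_sum]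
  simp [Function.comp_def]

lemma trace_sqrt_self_mul_conjTranspose (B : Matrix n n 𝕜) :
    (CFC.sqrt (B * Bᴴ)).trace = (CFC.sqrt (Bᴴ * B)).trace := by
  rw [CFC.sqrt_eq_real_sqrt _ (posSemidef_self_mul_conjTranspose B).nonneg,
    CFC.sqrt_eq_real_sqrt _ (posSemidef_conjTranspose_mul_self B).nonneg,
    cfcₙ_eq_cfc (hf0 := Real.sqrt_zero), cfcₙ_eq_cfc (hf0 := Real.sqrt_zero),
    (isHermitian_mul_conjTranspose_self B).trace_cfc,
    (isHermitian_conjTranspose_mul_self B).trace_cfc, charpoly_mul_comm]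

lemma sqrt_mul_conjTranspose_of_mul_self_eq_zero {B : Matrix n n 𝕜} (hB : B * B = 0) :
    CFC.sqrt ((B + Bᴴ) * (B + Bᴴ)ᴴ) = CFC.sqrt (B * Bᴴ) + CFC.sqrt (Bᴴ * B) := by
  have hBH : Bᴴ * Bᴴ = 0 := by rw [← conjTranspose_mul, hB, conjTranspose_zero]
  have hsplit : (B + Bᴴ) * (B + Bᴴ)ᴴ = B * Bᴴ + Bᴴ * B := by
    rw [conjTranspose_add, conjTranspose_conjTranspose, add_mul, mul_add, mul_add, hB, hBH]
    abel
  have horth : B * Bᴴ * (Bᴴ * B) = 0 := by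
    rw [Matrix.mul_assoc, ← Matrix.mul_assoc Bᴴ, hBH, Matrix.zero_mul, Matrix.mul_zero]
  rw [hsplit, (posSemidef_self_mul_conjTranspose B).sqrt_add_of_mul_eq_zero
    (posSemidef_conjTranspose_mul_self B) horth]

lemma PosSemidef.trace_mul_sqrt_eq_trace_sqrt {X P : Matrix n n 𝕜} (hX : X.PosSemidef)
    (h : X * (1 - P) = 0) : (P * CFC.sqrt X).trace = (CFC.sqrt X).trace := by
  have h1P := hX.trace_mul_sqrt_eq_zero h
  rw [sub_mul, one_mul, trace_sub, sub_eq_zero] at h1P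
  exact h1P.symm

theorem IsHermitian.trace_mul_sqrt_eq_trace_one_sub_mul_sqrt {A P : Matrix n n 𝕜}
    (hA : A.IsHermitian) (hP : IsStarProjection P) (hPAP : P * A * P = 0)
    (hQAQ : (1 - P) * A * (1 - P) = 0) :
    (P * CFC.sqrt (A * Aᴴ)).trace = ((1 - P) * CFC.sqrt (A * Aᴴ)).trace := by
  set Q := 1 - P
  have hPQ : P * Q = 0 := by rw [mul_sub, mul_one, hP.isIdempotentElem.eq, sub_self]
  have hQP : Q * P = 0 := by rw [sub_mul, one_mul, hP.isIdempotentElem.eq, sub_self]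
  set B := P * A * Q
  have hBH : Bᴴ = Q * A * P := by
    have hPH : Pᴴ = P := hP.isSelfAdjoint
    have hQH : Qᴴ = Q := hP.one_sub.isSelfAdjoint
    rw [conjTranspose_mul, conjTranspose_mul, hA.eq, hPH, hQH, Matrix.mul_assoc]
  have hAB : A = B + Bᴴ := by
    calc A = (P + Q) * A * (P + Q) := by rw [add_sub_cancel, Matrix.one_mul, Matrix.mul_one]
      _ = P * A * P + B + Bᴴ + Q * A * Q := by rw [hBH]; simp only [B]; noncomm_ring
      _ = B + Bᴴ := by rw [hPAP, hQAQ, zero_add, add_zero]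
  have hBB : B * B = 0 := by
    simp only [B, Matrix.mul_assoc, ← Matrix.mul_assoc Q, hQP, Matrix.zero_mul, Matrix.mul_zero]
  have hBBQ : B * Bᴴ * Q = 0 := by
    rw [Matrix.mul_assoc, hBH, Matrix.mul_assoc (Q * A), hPQ, Matrix.mul_zero, Matrix.mul_zero]
  have hBBP : Bᴴ * B * P = 0 := by
    rw [Matrix.mul_assoc, Matrix.mul_assoc (P * A), hQP, Matrix.mul_zero, Matrix.mul_zero]
  have hQ1 : 1 - Q = P := sub_sub_cancel 1 P
  rw [hAB, sqrt_mul_conjTranspose_of_mul_self_eq_zero hBB, mul_add, mul_add, trace_add, trace_add,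
    (posSemidef_self_mul_conjTranspose B).trace_mul_sqrt_eq_zero hBBQ,
    (posSemidef_conjTranspose_mul_self B).trace_mul_sqrt_eq_zero hBBP,
    (posSemidef_self_mul_conjTranspose B).trace_mul_sqrt_eq_trace_sqrt hBBQ,
    (posSemidef_conjTranspose_mul_self B).trace_mul_sqrt_eq_trace_sqrt (hQ1 ▸ hBBP), add_zero,
    zero_add, trace_sqrt_self_mul_conjTranspose]

section Indicator

variable {α R : Type*} [Fintype α] [DecidableEq α]

def diagIndicator [Zero R] [One R] (s : Finset α) : Matrix α α R :=
  diagonal fun i => if i ∈ s then 1 else 0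

lemma isStarProjection_diagIndicator [Semiring R] [StarRing R] (s : Finset α) :
    IsStarProjection (diagIndicator s : Matrix α α R) where
  isIdempotentElem := by
    rw [IsIdempotentElem, diagIndicator, diagonal_mul_diagonal]
    congr 1
    ext i
    split_ifs <;> simp
  isSelfAdjoint := by
    rw [IsSelfAdjoint, star_eq_conjTranspose, diagIndicator, diagonal_conjTranspose]
    congr 1
    ext i
    by_cases hi : i ∈ s <;> simp [hi]

lemma one_sub_diagIndicator [Ring R] (s : Finset α) :
    1 - (diagIndicator s : Matrix α α R) = diagIndicator sᶜ := by
  rw [diagIndicator, diagIndicator, ← diagonal_one, diagonal_sub]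
  congr 1
  ext i
  by_cases hi : i ∈ s <;> simp [hi]

lemma trace_diagIndicator_mul [Semiring R] (s : Finset α) (M : Matrix α α R) :
    (diagIndicator s * M).trace = ∑ i ∈ s, M i i := by
  simp [diagIndicator, trace, diagonal_mul, Finset.sum_ite_mem]

lemma diagIndicator_mul_mul_diagIndicator_eq_zero [Semiring R] {s : Finset α}
    {M : Matrix α α R} (h : ∀ i ∈ s, ∀ j ∈ s, M i j = 0) :
    diagIndicator s * M * diagIndicator s = 0 := by
  ext i j
  by_cases hi : i ∈ s <;> by_cases hj : j ∈ s <;>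
    simp [diagIndicator, diagonal_mul, mul_diagonal, hi, hj, h]

end Indicator

end Matrix

lemma SimpleGraph.diagIndicator_mul_adjMatrix_mul_diagIndicator {α R : Type*} [Fintype α]
    [DecidableEq α] [Semiring R] (G : SimpleGraph α) [DecidableRel G.Adj] {s : Finset α}
    (hs : G.IsIndepSet s) : diagIndicator s * G.adjMatrix R * diagIndicator s = 0 :=
  diagIndicator_mul_mul_diagIndicator_eq_zero fun _ hi _ hj =>
    by rw [adjMatrix_apply, if_neg fun hadj => hs hi hj hadj.ne hadj]

lemma vertexEnergy_eq_sqrt {n : ℕ} (G : SimpleGraph (Fin n)) [DecidableRel G.Adj] (i : Fin n) :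
    vertexEnergy G i = CFC.sqrt (G.adjMatrix ℝ * (G.adjMatrix ℝ)ᴴ) i i := by
  rw [CFC.sqrt_eq_real_sqrt _ (posSemidef_self_mul_conjTranspose _).nonneg,
    cfcₙ_eq_cfc (hf0 := Real.sqrt_zero), (isHermitian_mul_conjTranspose_self _).cfc_eq]
  rfl

theorem stmt_8 {n : ℕ} (G : SimpleGraph (Fin n)) [DecidableRel G.Adj]
    (V W : Finset (Fin n)) (hdisj : Disjoint V W) (hcover : V ∪ W = Finset.univ)
    (hbip : ∀ u v : Fin n, G.Adj u v → (u ∈ V ∧ v ∈ W) ∨ (u ∈ W ∧ v ∈ V)) :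
    ∑ v ∈ V, vertexEnergy G v = ∑ w ∈ W, vertexEnergy G w := by
  have hV : G.IsIndepSet V := fun u hu v hv _ huv =>
    (hbip u v huv).elim (fun h => disjoint_left.mp hdisj hv h.2)
      (fun h => disjoint_left.mp hdisj hu h.1)
  have hW : G.IsIndepSet W := fun u hu v hv _ huv =>
    (hbip u v huv).elim (fun h => disjoint_right.mp hdisj hu h.1)
      (fun h => disjoint_right.mp hdisj hv h.2)
  obtain rfl : W = Vᶜ := (IsCompl.of_eq hdisj.eq_bot (by rwa [Finset.sup_eq_union])).compl_eq.symm
  simp only [vertexEnergy_eq_sqrt, ← trace_diagIndicator_mul, ← one_sub_diagIndicator]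
  exact (isHermitian_iff_isSymm.2 G.isSymm_adjMatrix).trace_mul_sqrt_eq_trace_one_sub_mul_sqrt
    (isStarProjection_diagIndicator V) (G.diagIndicator_mul_adjMatrix_mul_diagIndicator hV)
    (one_sub_diagIndicator (R := ℝ) V ▸ G.diagIndicator_mul_adjMatrix_mul_diagIndicator hW)
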